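/- arXiv:1104.3832 — 2 statements merged into one kernel-verified Lean document; each statement's English description precedes it below -/
import Mathlib

section
/- Let ν ∈ [0,∞), g ∈ (0,∞), F ∈ (0,∞), E ∈ [0,∞), δ ∈ [0,∞), and assume g·E < F². Set W⁺ := F + √(F² − g·E), W⁻ := F − √(F² − g·E), and η(t) := exp((W⁺ − W⁻)·e_ν(t)) for t ∈ [0,∞). Define Tc ∈ (0,+∞] as follows: if ν > 0 and (W⁻ + g·δ)·e^{(W⁺−W⁻)/ν} ≤ W⁺ + g·δ, then Tc := +∞; if ν > 0 and (W⁻ + g·δ)·e^{(W⁺−W⁻)/ν} > W⁺ + g·δ, then Tc := −(1/ν)·log(1 − (ν/(W⁺−W⁻))·log((W⁺ + g·δ)/(W⁻ + g·δ))); if ν = 0 and W⁻ + g·δ > 0, then Tc := (1/(W⁺−W⁻))·log((W⁺ + g·δ)/(W⁻ + g·δ)); if ν = 0 and W⁻ + g·δ = 0, then Tc := +∞. Then for every t ∈ [0,Tc) one has (W⁺ + g·δ) − (W⁻ + g·δ)·η(t) > 0, and the function R : [0,Tc) → [0,∞) defined by R(t) := (1/g)·[W⁺·(W⁻ + g·δ)·η(t)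 − W⁻·(W⁺ + g·δ)]/[(W⁺ + g·δ) − (W⁻ + g·δ)·η(t)]·e^{−νt} is C¹, satisfies R(0) = δ, and satisfies R'(t) = −ν·R(t) + 2F·e^{−νt}·R(t) + g·R(t)² + E·e^{−2νt} for all t ∈ [0,Tc). -/
/-!
Put `u := g R e^{νt}` and `s := e_ν(t)`, so that `ds/dt = e^{-νt}`. The control equation becomes
the autonomous Riccati equation `du/ds = u² + 2F u + gE = (u + W⁺)(u + W⁻)`, because
`W⁺ + W⁻ = 2F` and `W⁺ W⁻ = gE`. Its solution with `u(0) = gδ` is a Möbius function of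
`η = exp((W⁺ - W⁻) s)`, finite as long as `(W⁻ + gδ) η < W⁺ + gδ`, i.e.
`(W⁺ - W⁻) e_ν(t) < log ((W⁺ + gδ)/(W⁻ + gδ))`; `Tc` is the first time this fails, and it is
`+∞` when the bound `e_ν < 1/ν` already guarantees it.
-/

open Set

/-- `e_ν(t) := (1 − e^{−νt})/ν` for `ν > 0`, and `e_0(t) := t`. -/
noncomputable def eNu (ν t : ℝ) : ℝ :=
  if ν = 0 then t else (1 - Real.exp (-ν * t)) / ν

/-- `W⁺ := F + √(F² − gE)`. -/
noncomputable def Wplus (g F E : ℝ) : ℝ := F + Real.sqrt (F ^ 2 - g * E)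

/-- `W⁻ := F − √(F² − gE)`. -/
noncomputable def Wminus (g F E : ℝ) : ℝ := F - Real.sqrt (F ^ 2 - g * E)

/-- `η(t) := exp((W⁺ − W⁻)·e_ν(t))`. -/
noncomputable def eta7 (ν g F E t : ℝ) : ℝ :=
  Real.exp ((Wplus g F E - Wminus g F E) * eNu ν t)

/-- The critical time of Lemma 5.5 of the paper. -/
noncomputable def Tc7 (ν g F E δ : ℝ) : EReal :=
  if ν = 0 then
    (if Wminus g F E + g * δ = 0 then ⊤
     else ((1 / (Wplus g F E - Wminus g F E) *
       Real.log ((Wplus g F E + g * δ) / (Wminus g F E + g * δ)) : ℝ) : EReal))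
  else
    (if (Wminus g F E + g * δ) * Real.exp ((Wplus g F E - Wminus g F E) / ν)
        ≤ Wplus g F E + g * δ then ⊤
     else ((-(1 / ν) * Real.log (1 - ν / (Wplus g F E - Wminus g F E) *
       Real.log ((Wplus g F E + g * δ) / (Wminus g F E + g * δ))) : ℝ) : EReal))

/-- The explicit solution of Lemma 5.5(ii) of the paper. -/
noncomputable def R7 (ν g F E δ t : ℝ) : ℝ :=
  (1 / g) *
    ((Wplus g F E * (Wminus g F E + g * δ) * eta7 ν g F E t
        - Wminus g F E * (Wplus g F E + g * δ)) /
      ((Wplus g F E + g * δ) - (Wminus g F E + g * δ) * eta7 ν g F E t)) *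
    Real.exp (-ν * t)

open Real

theorem mul_exp_lt_of_lt_log {p q x : ℝ} (hp : 0 < p) (hq : 0 < q) (hx : x < log (p / q)) :
    q * exp x < p := by
  rw [lt_log_iff_exp_lt (div_pos hp hq), lt_div_iff₀ hq] at hx
  linarith

section eNu

theorem eNu_zero (ν : ℝ) : eNu ν 0 = 0 := by
  simp [eNu]

theorem eNu_zero_left (t : ℝ) : eNu 0 t = t := if_pos rfl

theorem hasDerivAt_eNu (ν t : ℝ) : HasDerivAt (eNu ν) (exp (-ν * t)) t := by
  by_cases hν : ν = 0
  · subst hν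
    rw [show eNu 0 = id from funext eNu_zero_left]
    simpa using hasDerivAt_id t
  · rw [show eNu ν = fun x => (1 - exp (-ν * x)) / ν from funext fun x => if_neg hν]
    refine ((((hasDerivAt_id' t).const_mul (-ν)).exp.const_sub 1).div_const ν).congr_deriv ?_
    field_simp

theorem eNu_nonneg {ν t : ℝ} (hν : 0 ≤ ν) (ht : 0 ≤ t) : 0 ≤ eNu ν t := by
  unfold eNu
  split_ifs
  · exact ht
  · exact div_nonneg (sub_nonneg.2 (exp_le_one_iff.2 (by nlinarith))) hν

theorem eNu_lt_inv {ν : ℝ} (hν : 0 < ν) (t : ℝ) : eNu ν t < 1 / ν := by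
  simp only [eNu, hν.ne', if_false]
  gcongr
  linarith [exp_pos (-ν * t)]

theorem mul_eNu_lt_of_lt_neg_log {ν a L t : ℝ} (hν : 0 < ν) (ha : 0 < a)
    (hL : ν / a * L < 1) (ht : t < -(1 / ν) * log (1 - ν / a * L)) :
    a * eNu ν t < L := by
  have hlog : log (1 - ν / a * L) < -ν * t := by
    have := mul_lt_mul_of_pos_left ht hν
    rw [show ν * (-(1 / ν) * log (1 - ν / a * L)) = -log (1 - ν / a * L) by field_simp] at this
    linarith
  have hexp : 1 - ν / a * L < exp (-ν * t) := (log_lt_iff_lt_exp (by linarith)).1 hlog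
  simp only [eNu, hν.ne', if_false]
  rw [mul_div_assoc', div_lt_iff₀ hν]
  have : ν / a * L * a = ν * L := by field_simp
  nlinarith

end eNu

section riccati

/-- The solution of `u' = (u + A) (u + B)`, `u 0 = c`: the ratio `(u + B) / (u + A)` is
`(B + c) / (A + c) · exp ((A - B) s)`. -/
noncomputable def riccatiSol (A B c s : ℝ) : ℝ :=
  (A * (B + c) * exp ((A - B) * s) - B * (A + c)) / ((A + c) - (B + c) * exp ((A - B) * s))

theorem riccatiSol_zero {A B : ℝ} (hAB : A ≠ B) (c : ℝ) : riccatiSol A B c 0 = c := by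
  have : A - B ≠ 0 := sub_ne_zero.2 hAB
  simp only [riccatiSol, mul_zero, exp_zero, mul_one]
  rw [div_eq_iff (by intro h; apply this; linarith)]
  ring

theorem hasDerivAt_riccatiSol {A B c s : ℝ}
    (hden : (A + c) - (B + c) * exp ((A - B) * s) ≠ 0) :
    HasDerivAt (riccatiSol A B c)
      ((riccatiSol A B c s + A) * (riccatiSol A B c s + B)) s := by
  have hη : HasDerivAt (fun s => exp ((A - B) * s)) (exp ((A - B) * s) * (A - B)) s := by
    simpa using ((hasDerivAt_id s).const_mul (A - B)).exp
  refine (((hη.const_mul (A * (B + c))).sub_const (B * (A + c))).div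
    ((hη.const_mul (B + c)).const_sub (A + c)) hden).congr_deriv ?_
  simp only [riccatiSol]
  field_simp
  ring

theorem riccatiSol_nonneg {A B c s : ℝ} (hB : 0 ≤ B) (hBA : B ≤ A) (hc : 0 ≤ c) (hs : 0 ≤ s)
    (hden : 0 < (A + c) - (B + c) * exp ((A - B) * s)) : 0 ≤ riccatiSol A B c s := by
  have hη : 1 ≤ exp ((A - B) * s) := one_le_exp (mul_nonneg (sub_nonneg.2 hBA) hs)
  refine div_nonneg ?_ hden.le
  nlinarith [mul_nonneg (mul_nonneg (hB.trans hBA) (add_nonneg hB hc)) (sub_nonneg.2 hη),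
    mul_nonneg hc (sub_nonneg.2 hBA)]

end riccati

section W

variable {g F E : ℝ}

theorem Wplus_add_Wminus : Wplus g F E + Wminus g F E = 2 * F := by
  simp only [Wplus, Wminus]; ring

theorem Wplus_mul_Wminus (hEF : g * E ≤ F ^ 2) : Wplus g F E * Wminus g F E = g * E := by
  have := sq_sqrt (sub_nonneg.2 hEF)
  simp only [Wplus, Wminus]
  nlinarith

theorem Wminus_lt_Wplus (hEF : g * E < F ^ 2) : Wminus g F E < Wplus g F E := by
  have := sqrt_pos.2 (sub_pos.2 hEF)
  simp only [Wplus, Wminus]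
  linarith

theorem Wminus_nonneg (hF : 0 ≤ F) (hgE : 0 ≤ g * E) : 0 ≤ Wminus g F E := by
  have : sqrt (F ^ 2 - g * E) ≤ F := by
    rw [sqrt_le_left hF]; linarith
  simp only [Wminus]
  linarith

end W

theorem R7_eq (ν g F E δ t : ℝ) :
    R7 ν g F E δ t =
      1 / g * riccatiSol (Wplus g F E) (Wminus g F E) (g * δ) (eNu ν t) * exp (-ν * t) := rfl

section R7

variable {ν g F E δ t : ℝ}

theorem R7_zero (hg : g ≠ 0) (hEF : g * E < F ^ 2) : R7 ν g F E δ 0 = δ := by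
  rw [R7_eq, eNu_zero, riccatiSol_zero (Wminus_lt_Wplus hEF).ne']
  field_simp
  simp

theorem mul_eNu_lt_log_of_lt_Tc7 (hν : 0 ≤ ν) (hWW : Wminus g F E < Wplus g F E)
    (hp : 0 < Wplus g F E + g * δ) (hq : 0 < Wminus g F E + g * δ)
    (htc : (t : EReal) < Tc7 ν g F E δ) :
    (Wplus g F E - Wminus g F E) * eNu ν t <
      log ((Wplus g F E + g * δ) / (Wminus g F E + g * δ)) := by
  unfold Tc7 at htc
  set a := Wplus g F E - Wminus g F E
  set p := Wplus g F E + g * δ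
  set q := Wminus g F E + g * δ
  set L := log (p / q)
  have ha : 0 < a := sub_pos.2 hWW
  rcases hν.eq_or_lt with rfl | hν
  · rw [if_pos rfl, if_neg hq.ne', EReal.coe_lt_coe_iff] at htc
    rw [eNu_zero_left]
    calc a * t < a * (1 / a * L) := mul_lt_mul_of_pos_left htc ha
      _ = L := by field_simp
  · rw [if_neg hν.ne'] at htc
    split_ifs at htc with hcond
    · have hLa : a / ν ≤ L :=
        (le_log_iff_exp_le (div_pos hp hq)).2 ((le_div_iff₀ hq).2 (by linarith))
      calc a * eNu ν t < a * (1 / ν) := mul_lt_mul_of_pos_left (eNu_lt_inv hν t) ha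
        _ = a / ν := by ring
        _ ≤ L := hLa
    · have hLa : L < a / ν :=
        (log_lt_iff_lt_exp (div_pos hp hq)).2 ((div_lt_iff₀ hq).2 (by linarith))
      refine mul_eNu_lt_of_lt_neg_log hν ha ?_ (EReal.coe_lt_coe_iff.1 htc)
      calc ν / a * L < ν / a * (a / ν) := mul_lt_mul_of_pos_left hLa (by positivity)
        _ = 1 := by field_simp

theorem Wminus_add_mul_eta7_lt (hν : 0 ≤ ν) (hEF : g * E < F ^ 2)
    (hp : 0 < Wplus g F E + g * δ) (hq : 0 ≤ Wminus g F E + g * δ)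
    (htc : (t : EReal) < Tc7 ν g F E δ) :
    (Wminus g F E + g * δ) * eta7 ν g F E t < Wplus g F E + g * δ := by
  rcases hq.eq_or_lt with hq0 | hq
  · rwa [← hq0, zero_mul]
  · exact mul_exp_lt_of_lt_log hp hq
      (mul_eNu_lt_log_of_lt_Tc7 hν (Wminus_lt_Wplus hEF) hp hq htc)

theorem hasDerivAt_R7 (hg : g ≠ 0) (hEF : g * E ≤ F ^ 2)
    (hden : Wplus g F E + g * δ - (Wminus g F E + g * δ) * eta7 ν g F E t ≠ 0) :
    HasDerivAt (R7 ν g F E δ)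
      (-ν * R7 ν g F E δ t + 2 * F * exp (-ν * t) * R7 ν g F E δ t
        + g * R7 ν g F E δ t ^ 2 + E * exp (-2 * ν * t)) t := by
  have hu := (hasDerivAt_riccatiSol hden).comp t (hasDerivAt_eNu ν t)
  have he : HasDerivAt (fun τ => exp (-ν * τ)) (exp (-ν * t) * (-ν)) t := by
    simpa using ((hasDerivAt_id' t).const_mul (-ν)).exp
  refine ((hu.const_mul (1 / g)).mul he).congr_deriv ?_
  have hF : F = (Wplus g F E + Wminus g F E) / 2 := by rw [Wplus_add_Wminus]; ring
  have hE : E = Wplus g F E * Wminus g F E / g := by rw [Wplus_mul_Wminus hEF]; field_simp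
  rw [R7_eq, show exp (-2 * ν * t) = exp (-ν * t) ^ 2 by rw [← exp_nat_mul]; ring_nf]
  simp only [Function.comp_apply]
  generalize riccatiSol (Wplus g F E) (Wminus g F E) (g * δ) (eNu ν t) = u
  generalize Wplus g F E = A at hE hF
  generalize Wminus g F E = B at hE hF
  subst hE hF
  field_simp
  ring

end R7

/-- Lemma 5.5(ii) of the paper: the explicit solution of the control equation
`R' = −νR + 2F e^{−νt} R + gR² + E e^{−2νt}`, `R(0) = δ`, on `[0,Tc)`. -/
theorem stmt7 (ν g F E δ : ℝ) (hν : 0 ≤ ν) (hg : 0 < g) (hF : 0 < F) (hE : 0 ≤ E)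
    (hδ : 0 ≤ δ) (hEF : g * E < F ^ 2) :
    (∀ t : ℝ, 0 ≤ t → (t : EReal) < Tc7 ν g F E δ →
      0 < (Wplus g F E + g * δ) - (Wminus g F E + g * δ) * eta7 ν g F E t) ∧
    R7 ν g F E δ 0 = δ ∧
    (∀ t : ℝ, 0 ≤ t → (t : EReal) < Tc7 ν g F E δ →
      0 ≤ R7 ν g F E δ t ∧
      HasDerivWithinAt (fun τ => R7 ν g F E δ τ)
        (-ν * R7 ν g F E δ t + 2 * F * Real.exp (-ν * t) * R7 ν g F E δ t
          + g * R7 ν g F E δ t ^ 2 + E * Real.exp (-2 * ν * t))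
        {τ : ℝ | 0 ≤ τ ∧ (τ : EReal) < Tc7 ν g F E δ} t) := by
  have hgδ : 0 ≤ g * δ := mul_nonneg hg.le hδ
  have hWm : 0 ≤ Wminus g F E := Wminus_nonneg hF.le (mul_nonneg hg.le hE)
  have hWW : Wminus g F E < Wplus g F E := Wminus_lt_Wplus hEF
  have hden : ∀ t : ℝ, (t : EReal) < Tc7 ν g F E δ →
      0 < (Wplus g F E + g * δ) - (Wminus g F E + g * δ) * eta7 ν g F E t := fun t htc =>
    sub_pos.2 (Wminus_add_mul_eta7_lt hν hEF (by linarith) (by linarith) htc)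
  refine ⟨fun t _ => hden t, R7_zero hg.ne' hEF, fun t ht htc => ⟨?_, ?_⟩⟩
  · rw [R7_eq]
    have := riccatiSol_nonneg hWm hWW.le hgδ (eNu_nonneg hν ht) (hden t htc)
    positivity
  · exact (hasDerivAt_R7 hg.ne' hEF.le (hden t htc).ne').hasDerivWithinAt
end

section
/- Fix an integer d ≥ 2, ν ∈ [0,∞), T ∈ (0,+∞], and a finite set G ⊂ ℤ^d∖{0} with G = −G. Let γ = (γ_k)_{k∈G} be a C¹ solution on [0,T) of the Galerkin component system with zero forcing, dγ_k/dt = −ν|k|²γ_k − i(2π)^{−d/2} ∑_{h∈G} (γ_h·(k−h))·P_k γ_{k−h} (k ∈ G, γ_j := 0 for j ∉ G), such that for every t ∈ [0,T) and k ∈ G one has conj(γ_k(t)) = γ_{−k}(t) and k·γ_k(t) = 0. Then: (a) if ν = 0, ∑_{k∈G} |γ_k(t)|² = ∑_{k∈G} |γ_k(0)|² for all t ∈ [0,T); (b) if ν > 0, √(∑_{k∈G} |γ_k(t)|²) ≤ √(∑_{k∈G} |γ_k(0)|²) · e^{−νt} for all t ∈ [0,T). -/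
open Filter Set Finset

/-- `k·c := ∑_r k_r c_r` (no complex conjugation). -/
noncomputable def zcDot {d : ℕ} (k : Fin d → ℤ) (c : Fin d → ℂ) : ℂ := ∑ r, (k r : ℂ) * c r

/-- `|k|²`, the squared Euclidean norm of `k ∈ ℤ^d`. -/
def zNormSq {d : ℕ} (k : Fin d → ℤ) : ℤ := ∑ r, (k r) ^ 2

/-- `P_k c := c − (k·c)·k/|k|²`, the projection of `ℂ^d` onto the orthogonal
complement of `k`. -/
noncomputable def projPerp {d : ℕ} (k : Fin d → ℤ) (c : Fin d → ℂ) : Fin d → ℂ :=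
  fun r => c r - zcDot k c * (k r : ℂ) / (zNormSq k : ℂ)

/-- The right-hand side of the Galerkin component system:
`−ν|k|²γ_k − i(2π)^{−d/2} ∑_{h∈G} (γ_h·(k−h))·P_k γ_{k−h} + f_k`. -/
noncomputable def galRHS (d : ℕ) (ν : ℝ) (G : Finset (Fin d → ℤ))
    (f : (Fin d → ℤ) → ℝ → Fin d → ℂ) (γ : (Fin d → ℤ) → ℝ → Fin d → ℂ)
    (k : Fin d → ℤ) (t : ℝ) : Fin d → ℂ :=
  fun r =>
    -((ν : ℂ) * (zNormSq k : ℂ)) * γ k t r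
      - Complex.I * (((2 * Real.pi) ^ (-(d : ℝ) / 2) : ℝ) : ℂ) *
        ∑ h ∈ G, zcDot (k - h) (γ h t) * projPerp k (γ (k - h) t) r
      + f k t r

/-!
Let `E(t) = ∑_k |γ_k(t)|²`. Pairing the equation with `conj γ_k = γ_{-k}`, the projection `P_k`
drops out because `k·γ_k = 0`, and the nonlinear part of `E'` becomes the triad sum
`∑_{k,h} (γ_h·(k-h)) (γ_{k-h}·γ_{-k})`. The substitution `(k, h) ↦ (h - k, h)` pairs each term
with one whose sum with it carries the factor `γ_h·(-h) = 0`, so the triad sum vanishes and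
`E' = -2ν ∑_k |k|² |γ_k|²`. For `ν = 0` the energy is constant; for `ν > 0`, `|k|² ≥ 1` on
`ℤ^d ∖ {0}` gives `E' ≤ -2νE`, and Grönwall yields `E(t) ≤ E(0) e^{-2νt}`.
-/

open ComplexConjugate

section Galerkin

variable {d : ℕ}

lemma one_le_zNormSq {k : Fin d → ℤ} (hk : k ≠ 0) : 1 ≤ zNormSq k := by
  obtain ⟨r, hr⟩ := Function.ne_iff.mp hk
  calc 1 ≤ k r ^ 2 := by nlinarith [Int.one_le_abs hr, sq_abs (k r)]
    _ ≤ zNormSq k := single_le_sum (f := fun i => k i ^ 2) (fun i _ => sq_nonneg _) (mem_univ r)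

lemma sum_sum_normSq_le_sum_zNormSq_mul {G : Finset (Fin d → ℤ)} (hG0 : (0 : Fin d → ℤ) ∉ G)
    (u : (Fin d → ℤ) → Fin d → ℂ) :
    ∑ k ∈ G, ∑ r, Complex.normSq (u k r) ≤ ∑ k ∈ G, zNormSq k * ∑ r, Complex.normSq (u k r) :=
  sum_le_sum fun _ hk => le_mul_of_one_le_left (sum_nonneg fun _ _ => Complex.normSq_nonneg _)
    (mod_cast one_le_zNormSq (ne_of_mem_of_not_mem hk hG0))

lemma sum_projPerp_mul_conj {k : Fin d → ℤ} {w : Fin d → ℂ} (hw : zcDot k w = 0)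
    (v : Fin d → ℂ) : ∑ r, projPerp k v r * conj (w r) = ∑ r, v r * conj (w r) := by
  have hkw : ∑ r, (k r : ℂ) * conj (w r) = 0 := by
    simpa [zcDot, map_sum] using congrArg conj hw
  simp only [projPerp, sub_mul, sum_sub_distrib, sub_eq_self]
  calc ∑ r, zcDot k v * k r / zNormSq k * conj (w r)
      = zcDot k v / zNormSq k * ∑ r, (k r : ℂ) * conj (w r) := by
        rw [mul_sum]; exact sum_congr rfl fun r _ => by ring
    _ = 0 := by rw [hkw, mul_zero]

lemma sum_triad_eq_zero {G : Finset (Fin d → ℤ)} (hGsym : ∀ k ∈ G, -k ∈ G)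
    {u : (Fin d → ℤ) → Fin d → ℂ} (hu : ∀ j ∉ G, u j = 0)
    (hreal : ∀ k ∈ G, ∀ r, conj (u k r) = u (-k) r) (hdiv : ∀ k ∈ G, zcDot k (u k) = 0) :
    ∑ k ∈ G, ∑ h ∈ G, zcDot (k - h) (u h) * ∑ r, u (k - h) r * conj (u k r) = 0 := by
  set f : (Fin d → ℤ) × (Fin d → ℤ) → ℂ := fun p =>
    zcDot (p.1 - p.2) (u p.2) * ∑ r, u (p.1 - p.2) r * u (-p.1) r
  set P : Finset ((Fin d → ℤ) × (Fin d → ℤ)) := {p ∈ G ×ˢ G | p.1 - p.2 ∈ G}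
  have hsum : ∑ k ∈ G, ∑ h ∈ G, zcDot (k - h) (u h) * ∑ r, u (k - h) r * conj (u k r)
      = ∑ p ∈ P, f p := by
    rw [sum_filter_of_ne fun p _ hp => by_contra fun hpG => hp (by simp [f, hu _ hpG]),
      sum_product]
    exact sum_congr rfl fun k hk => sum_congr rfl fun h _ => by simp only [f, hreal k hk]
  rw [hsum]
  have hpair : ∀ p ∈ P, f p + f (p.2 - p.1, p.2) = 0 := by
    intro p hp
    obtain ⟨⟨-, hh⟩, -⟩ := by simpa [P] using hp
    have hdot : zcDot (p.1 - p.2) (u p.2) + zcDot (-p.1) (u p.2) = -zcDot p.2 (u p.2) := by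
      simp only [zcDot, ← sum_add_distrib, ← sum_neg_distrib]
      exact sum_congr rfl fun r _ => by push_cast [Pi.sub_apply, Pi.neg_apply]; ring
    simp only [f, sub_sub_cancel_left, neg_sub, mul_comm (u (-p.1) _)]
    rw [← add_mul, hdot, hdiv _ hh, neg_zero, zero_mul]
  refine sum_involution (fun p _ => (p.2 - p.1, p.2)) hpair
    (fun p hp hfp hfix => hfp (add_self_eq_zero.mp (by simpa [hfix] using hpair p hp)))
    (fun p hp => ?_) (fun p _ => by simp)
  obtain ⟨⟨hk, hh⟩, hkh⟩ := by simpa [P] using hp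
  simpa [P, hh] using ⟨neg_sub p.1 p.2 ▸ hGsym _ hkh, hGsym _ hk⟩

lemma sum_galRHS_mul_conj (ν : ℝ) (G : Finset (Fin d → ℤ))
    (γ : (Fin d → ℤ) → ℝ → Fin d → ℂ) {k : Fin d → ℤ} {t : ℝ} (hdiv : zcDot k (γ k t) = 0) :
    ∑ r, galRHS d ν G (fun _ _ _ => 0) γ k t r * conj (γ k t r) =
      ((-(ν * zNormSq k * ∑ r, Complex.normSq (γ k t r)) : ℝ) : ℂ)
        - Complex.I * (((2 * Real.pi) ^ (-(d : ℝ) / 2) : ℝ) : ℂ) *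
          ∑ h ∈ G, zcDot (k - h) (γ h t) * ∑ r, γ (k - h) t r * conj (γ k t r) := by
  simp only [galRHS, add_zero, sub_mul, sum_sub_distrib, sum_mul, mul_sum]
  congr 1
  · push_cast
    rw [← sum_neg_distrib]
    exact sum_congr rfl fun r _ => by rw [mul_assoc, Complex.mul_conj]; ring
  · rw [sum_comm]
    simp only [mul_assoc, ← mul_sum, sum_projPerp_mul_conj hdiv]

lemma sum_re_galRHS_mul_conj (ν : ℝ) {G : Finset (Fin d → ℤ)}
    (hGsym : ∀ k ∈ G, -k ∈ G) {γ : (Fin d → ℤ) → ℝ → Fin d → ℂ} {t : ℝ}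
    (hγ0 : ∀ j ∉ G, γ j t = 0) (hconj : ∀ k ∈ G, ∀ r, conj (γ k t r) = γ (-k) t r)
    (hdiv : ∀ k ∈ G, zcDot k (γ k t) = 0) :
    ∑ k ∈ G, ∑ r, (galRHS d ν G (fun _ _ _ => 0) γ k t r * conj (γ k t r)).re =
      -ν * ∑ k ∈ G, zNormSq k * ∑ r, Complex.normSq (γ k t r) := by
  have htriad := sum_triad_eq_zero hGsym (u := fun k => γ k t) hγ0 hconj hdiv
  simp only [← Complex.re_sum, sum_congr rfl fun k hk => sum_galRHS_mul_conj ν G γ (hdiv k hk),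
    sum_sub_distrib, ← mul_sum, htriad, mul_zero, sub_zero, ← Complex.ofReal_sum, Complex.ofReal_re]
  rw [mul_sum]
  exact sum_congr rfl fun k _ => by ring

end Galerkin

lemma HasDerivWithinAt.sum_sum_normSq {ι κ : Type*} [Fintype κ] (G : Finset ι)
    {f : ι → ℝ → κ → ℂ} {f' : ι → κ → ℂ} {s : Set ℝ} {t : ℝ}
    (hf : ∀ i ∈ G, HasDerivWithinAt (f i) (f' i) s t) :
    HasDerivWithinAt (fun τ => ∑ i ∈ G, ∑ r, Complex.normSq (f i τ r))
      (2 * ∑ i ∈ G, ∑ r, (f' i r * conj (f i t r)).re) s t := by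
  simp only [mul_sum]
  refine HasDerivWithinAt.fun_sum fun i hi => HasDerivWithinAt.fun_sum fun r _ => ?_
  simpa [Complex.normSq_eq_norm_sq, Complex.inner] using
    ((hasDerivWithinAt_pi.1 (hf i hi)) r).norm_sq

section Interval

variable {f f' : ℝ → ℝ} {a b : ℝ}

lemma eq_of_hasDerivWithinAt_Icc_zero (hab : a ≤ b)
    (hf : ∀ x ∈ Icc a b, HasDerivWithinAt f 0 (Icc a b) x) : f b = f a :=
  constant_of_has_deriv_right_zero (fun x hx => (hf x hx).continuousWithinAt)
    (fun x hx => (hf x (Ico_subset_Icc_self hx)).mono_of_mem_nhdsWithin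
      (Icc_mem_nhdsGE_of_mem hx)) b ⟨hab, le_rfl⟩

lemma le_mul_exp_of_hasDerivWithinAt_Icc {K : ℝ} (hab : a ≤ b)
    (hf : ∀ x ∈ Icc a b, HasDerivWithinAt f (f' x) (Icc a b) x)
    (hf' : ∀ x ∈ Ico a b, f' x ≤ K * f x) : f b ≤ f a * Real.exp (K * (b - a)) := by
  have := le_gronwallBound_of_liminf_deriv_right_le (ε := 0)
    (fun x hx => (hf x hx).continuousWithinAt)
    (fun x hx r hr => ((hf x (Ico_subset_Icc_self hx)).mono_of_mem_nhdsWithin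
      (Icc_mem_nhdsGE_of_mem hx)).liminf_right_slope_le hr)
    le_rfl (fun x hx => by simpa using hf' x hx) b ⟨hab, le_rfl⟩
  rwa [gronwallBound_ε0] at this

end Interval

lemma Real.sqrt_le_sqrt_mul_exp_of_le_mul_exp_two_mul {a b c : ℝ}
    (h : a ≤ b * Real.exp (2 * c)) : √a ≤ √b * Real.exp c := by
  calc √a ≤ √(b * Real.exp (2 * c)) := Real.sqrt_le_sqrt h
    _ = √b * Real.exp c := by
      rw [Real.sqrt_mul' _ (Real.exp_pos _).le, ← Real.sqrt_sq (Real.exp_pos c).le,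
        ← Real.exp_nat_mul]
      norm_num

theorem stmt14_general (d : ℕ) (ν : ℝ) (T : EReal)
    (G : Finset (Fin d → ℤ)) (hG0 : (0 : Fin d → ℤ) ∉ G) (hGsym : ∀ k ∈ G, -k ∈ G)
    (γ : (Fin d → ℤ) → ℝ → Fin d → ℂ)
    (hγ0 : ∀ j, j ∉ G → ∀ t : ℝ, γ j t = 0)
    (hODE : ∀ k ∈ G, ∀ t : ℝ, 0 ≤ t → (t : EReal) < T →
      HasDerivWithinAt (γ k) (galRHS d ν G (fun _ _ _ => 0) γ k t)
        {τ : ℝ | 0 ≤ τ ∧ (τ : EReal) < T} t)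
    (hconj : ∀ k ∈ G, ∀ t : ℝ, 0 ≤ t → (t : EReal) < T →
      ∀ r, (starRingEnd ℂ) (γ k t r) = γ (-k) t r)
    (hdiv : ∀ k ∈ G, ∀ t : ℝ, 0 ≤ t → (t : EReal) < T → zcDot k (γ k t) = 0) :
    (ν = 0 → ∀ t : ℝ, 0 ≤ t → (t : EReal) < T →
      ∑ k ∈ G, ∑ r, Complex.normSq (γ k t r) = ∑ k ∈ G, ∑ r, Complex.normSq (γ k 0 r)) ∧
    (0 < ν → ∀ t : ℝ, 0 ≤ t → (t : EReal) < T →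
      Real.sqrt (∑ k ∈ G, ∑ r, Complex.normSq (γ k t r)) ≤
        Real.sqrt (∑ k ∈ G, ∑ r, Complex.normSq (γ k 0 r)) * Real.exp (-ν * t)) := by
  set E : ℝ → ℝ := fun t => ∑ k ∈ G, ∑ r, Complex.normSq (γ k t r)
  have hE : ∀ t : ℝ, 0 ≤ t → (t : EReal) < T → ∀ x ∈ Icc 0 t, HasDerivWithinAt E
      (-2 * ν * ∑ k ∈ G, zNormSq k * ∑ r, Complex.normSq (γ k x r)) (Icc 0 t) x := by
    intro t ht0 htT x hx
    have hIcc : Icc 0 t ⊆ {τ : ℝ | 0 ≤ τ ∧ (τ : EReal) < T} := fun y hy =>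
      ⟨hy.1, (EReal.coe_le_coe_iff.2 hy.2).trans_lt htT⟩
    obtain ⟨hx0, hxT⟩ := hIcc hx
    have := HasDerivWithinAt.sum_sum_normSq G fun k hk => (hODE k hk x hx0 hxT).mono hIcc
    rwa [sum_re_galRHS_mul_conj ν hGsym (fun j hj => hγ0 j hj x) (fun k hk => hconj k hk x hx0 hxT)
      (fun k hk => hdiv k hk x hx0 hxT), ← mul_assoc, mul_neg, ← neg_mul] at this
  refine ⟨fun hν t ht0 htT => ?_, fun hν t ht0 htT => ?_⟩
  · subst hν
    exact eq_of_hasDerivWithinAt_Icc_zero ht0 (by simpa using hE t ht0 htT)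
  · have hdecay : E t ≤ E 0 * Real.exp (-2 * ν * (t - 0)) :=
      le_mul_exp_of_hasDerivWithinAt_Icc ht0 (hE t ht0 htT) fun x _ =>
        mul_le_mul_of_nonpos_left (sum_sum_normSq_le_sum_zNormSq_mul hG0 _) (by linarith)
    exact Real.sqrt_le_sqrt_mul_exp_of_le_mul_exp_two_mul (by convert hdecay using 3; ring)

/-- Lemma 6.4(ii) of the paper: with zero forcing, energy conservation in the Euler
case (`ν = 0`) and exponential L² decay in the Navier–Stokes case (`ν > 0`). -/
theorem stmt14 (d : ℕ) (hd : 2 ≤ d) (ν : ℝ) (hν : 0 ≤ ν) (T : EReal) (hT : 0 < T)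
    (G : Finset (Fin d → ℤ)) (hG0 : (0 : Fin d → ℤ) ∉ G) (hGsym : ∀ k ∈ G, -k ∈ G)
    (γ : (Fin d → ℤ) → ℝ → Fin d → ℂ)
    (hγ0 : ∀ j, j ∉ G → ∀ t : ℝ, γ j t = 0)
    (hODE : ∀ k ∈ G, ∀ t : ℝ, 0 ≤ t → (t : EReal) < T →
      HasDerivWithinAt (γ k) (galRHS d ν G (fun _ _ _ => 0) γ k t)
        {τ : ℝ | 0 ≤ τ ∧ (τ : EReal) < T} t)
    (hconj : ∀ k ∈ G, ∀ t : ℝ, 0 ≤ t → (t : EReal) < T →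
      ∀ r, (starRingEnd ℂ) (γ k t r) = γ (-k) t r)
    (hdiv : ∀ k ∈ G, ∀ t : ℝ, 0 ≤ t → (t : EReal) < T → zcDot k (γ k t) = 0) :
    (ν = 0 → ∀ t : ℝ, 0 ≤ t → (t : EReal) < T →
      ∑ k ∈ G, ∑ r, Complex.normSq (γ k t r) = ∑ k ∈ G, ∑ r, Complex.normSq (γ k 0 r)) ∧
    (0 < ν → ∀ t : ℝ, 0 ≤ t → (t : EReal) < T →
      Real.sqrt (∑ k ∈ G, ∑ r, Complex.normSq (γ k t r)) ≤
        Real.sqrt (∑ k ∈ G, ∑ r, Complex.normSq (γ k 0 r)) * Real.exp (-ν * t)) :=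
  stmt14_general d ν T G hG0 hGsym γ hγ0 hODE hconj hdiv
end
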